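/- arXiv:2509.16065 — 6 statements merged into one kernel-verified Lean document; each statement's English description precedes it below -/
import Mathlib

section
/- Characterization of frozen -1 cells for the Toom rule (Lemma 1): let F be the Toom freezing majority cellular automaton on the n×n periodic grid, let x be a configuration with values in {-1,+1}, and define the relation R_x on V_n by R_x u w iff x_u = -1, x_w = -1, and w ∈ {u + (1,0), u + (0,1)}. Then for a cell v with x_v = -1, one has F^t(x)_v = -1 for all t ∈ ℕ if and only if there exists a cell w such that there is an R_x-path (possibly of length 0) from v to w and an R_x-cycle through w (i.e., Relation.ReflTransGen R_x v w and Relation.TransGen R_x w w hold). -/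
/-- The Toom freezing majority cellular automaton on the `n × n` periodic grid. -/
def toom (n : ℕ) (x : ZMod n × ZMod n → ℤ) : ZMod n × ZMod n → ℤ :=
  fun u => if x u = 1 ∨ 0 < x (u.1 + 1, u.2) + x (u.1, u.2 + 1) then 1 else -1

/-- The edge relation of the digraph `G_x` associated with a configuration `x`:
an edge from `u` to `w` iff both are in state `-1` and `w` is the east or north
neighbor of `u`. -/
def toomRel (n : ℕ) (x : ZMod n × ZMod n → ℤ) (u w : ZMod n × ZMod n) : Prop :=
  x u = -1 ∧ x w = -1 ∧ (w = u + (1, 0) ∨ w = u + (0, 1))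

/-- `toomP n x t u` : there is an `R_x`-chain of length `t` starting at `u`. -/
def toomP (n : ℕ) (x : ZMod n × ZMod n → ℤ) : ℕ → (ZMod n × ZMod n) → Prop
  | 0, u => x u = -1
  | (t+1), u => ∃ w, toomRel n x u w ∧ toomP n x t w

lemma toomP_neg {n : ℕ} {x : ZMod n × ZMod n → ℤ} :
    ∀ {t : ℕ} {u}, toomP n x t u → x u = -1
  | 0, _, h => h
  | (_+1), _, ⟨_, hr, _⟩ => hr.1

lemma toomP_mono {n : ℕ} {x : ZMod n × ZMod n → ℤ} :
    ∀ {t : ℕ} {u}, toomP n x (t+1) u → toomP n x t u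
  | 0, _, ⟨_, hr, _⟩ => hr.1
  | (_+1), _, ⟨w, hr, hw⟩ => ⟨w, hr, toomP_mono hw⟩

lemma add_one_zero {n : ℕ} (u : ZMod n × ZMod n) : u + ((1 : ZMod n), (0 : ZMod n)) = (u.1 + 1, u.2) := by
  ext <;> simp

lemma add_zero_one {n : ℕ} (u : ZMod n × ZMod n) : u + ((0 : ZMod n), (1 : ZMod n)) = (u.1, u.2 + 1) := by
  ext <;> simp

lemma toom_vals {n : ℕ} (x : ZMod n × ZMod n → ℤ) (u) :
    toom n x u = -1 ∨ toom n x u = 1 := by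
  unfold toom; split <;> simp

lemma iter_vals {n : ℕ} (x : ZMod n × ZMod n → ℤ) (hx : ∀ u, x u = -1 ∨ x u = 1) :
    ∀ t u, (toom n)^[t] x u = -1 ∨ (toom n)^[t] x u = 1 := by
  intro t
  induction t with
  | zero => exact hx
  | succ t ih =>
    intro u
    rw [Function.iterate_succ_apply']
    exact toom_vals _ u

lemma toom_neg_iff {n : ℕ} (y : ZMod n × ZMod n → ℤ) (hy : ∀ u, y u = -1 ∨ y u = 1) (u) :
    toom n y u = -1 ↔ (y u = -1 ∧ (y (u.1 + 1, u.2) = -1 ∨ y (u.1, u.2 + 1) = -1)) := by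
  unfold toom
  rcases hy u with h | h <;> rcases hy (u.1 + 1, u.2) with h2 | h2 <;>
    rcases hy (u.1, u.2 + 1) with h3 | h3 <;> norm_num [h, h2, h3]

lemma iter_neg_iff {n : ℕ} (x : ZMod n × ZMod n → ℤ) (hx : ∀ u, x u = -1 ∨ x u = 1) :
    ∀ t u, (toom n)^[t] x u = -1 ↔ toomP n x t u := by
  intro t
  induction t with
  | zero => intro u; exact Iff.rfl
  | succ t ih =>
    intro u
    rw [Function.iterate_succ_apply', toom_neg_iff _ (iter_vals x hx t), ih, ih, ih]
    constructor
    · rintro ⟨hu, he | hn⟩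
      · exact ⟨(u.1 + 1, u.2), ⟨toomP_neg hu, toomP_neg he, Or.inl (add_one_zero u).symm⟩, he⟩
      · exact ⟨(u.1, u.2 + 1), ⟨toomP_neg hu, toomP_neg hn, Or.inr (add_zero_one u).symm⟩, hn⟩
    · rintro ⟨w, hr, hw⟩
      refine ⟨toomP_mono ⟨w, hr, hw⟩, ?_⟩
      rcases hr.2.2 with h | h
      · left; rwa [h, add_one_zero] at hw
      · right; rwa [h, add_zero_one] at hw

lemma toomP_chain {n : ℕ} {x : ZMod n × ZMod n → ℤ} :
    ∀ {t : ℕ} {u}, toomP n x t u →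
      ∃ f : ℕ → ZMod n × ZMod n, f 0 = u ∧ ∀ i < t, toomRel n x (f i) (f (i+1)) := by
  intro t
  induction t with
  | zero => intro u _; exact ⟨fun _ => u, rfl, by omega⟩
  | succ t ih =>
    rintro u ⟨w, hr, hw⟩
    obtain ⟨g, hg0, hg⟩ := ih hw
    refine ⟨fun i => if i = 0 then u else g (i - 1), rfl, ?_⟩
    intro i hi
    match i with
    | 0 => simpa [hg0] using hr
    | (j+1) =>
      have := hg j (by omega)
      simpa using this

lemma chain_rtg {α : Type*} {R : α → α → Prop} {f : ℕ → α} {t : ℕ}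
    (h : ∀ i < t, R (f i) (f (i+1))) :
    ∀ a b, a ≤ b → b ≤ t → Relation.ReflTransGen R (f a) (f b) := by
  intro a b hab hbt
  induction b, hab using Nat.le_induction with
  | base => exact Relation.ReflTransGen.refl
  | succ b hab ih =>
    exact Relation.ReflTransGen.tail (ih (by omega)) (h b (by omega))

lemma chain_tg {α : Type*} {R : α → α → Prop} {f : ℕ → α} {t : ℕ}
    (h : ∀ i < t, R (f i) (f (i+1))) {a b : ℕ} (hab : a < b) (hbt : b ≤ t) :
    Relation.TransGen R (f a) (f b) :=
  Relation.TransGen.head' (h a (by omega)) (chain_rtg h (a+1) b (by omega) hbt)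

lemma cycle_all {n : ℕ} {x : ZMod n × ZMod n → ℤ} {w : ZMod n × ZMod n}
    (hc : Relation.TransGen (toomRel n x) w w) :
    ∀ (t : ℕ) (u), Relation.ReflTransGen (toomRel n x) u w → toomP n x t u := by
  intro t
  induction t with
  | zero =>
    intro u hu
    rcases hu.cases_head with rfl | ⟨c, hr, _⟩
    · obtain ⟨c, hr, _⟩ := Relation.TransGen.head'_iff.mp hc
      exact hr.1
    · exact hr.1
  | succ t ih =>
    intro u hu
    rcases hu.cases_head with rfl | ⟨c, hr, hcw⟩
    · obtain ⟨c, hr, hcw⟩ := Relation.TransGen.head'_iff.mp hc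
      exact ⟨c, hr, ih c hcw⟩
    · exact ⟨c, hr, ih c hcw⟩

theorem toom_frozen_iff_path_to_cycle (n : ℕ) (hn : 1 ≤ n)
    (x : ZMod n × ZMod n → ℤ) (hx : ∀ u, x u = -1 ∨ x u = 1)
    (v : ZMod n × ZMod n) (hv : x v = -1) :
    (∀ t : ℕ, (toom n)^[t] x v = -1) ↔
      ∃ w : ZMod n × ZMod n,
        Relation.ReflTransGen (toomRel n x) v w ∧
        Relation.TransGen (toomRel n x) w w := by
  haveI : NeZero n := ⟨by omega⟩
  have key : ∀ t, (toom n)^[t] x v = -1 ↔ toomP n x t v := fun t => iter_neg_iff x hx t v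
  constructor
  · intro h
    set N := Fintype.card (ZMod n × ZMod n) with hN
    have hP : toomP n x N v := (key N).mp (h N)
    obtain ⟨f, hf0, hf⟩ := toomP_chain hP
    obtain ⟨i, j, hij, hfe⟩ :=
      Fintype.exists_ne_map_eq_of_card_lt (fun i : Fin (N+1) => f i)
        (by rw [Fintype.card_fin]; omega)
    have hij' : (i : ℕ) ≠ (j : ℕ) := fun h => hij (Fin.ext h)
    rcases hij'.lt_or_gt with hlt | hlt
    · refine ⟨f i, ?_, ?_⟩
      · rw [← hf0]; exact chain_rtg hf 0 i (by omega) (by omega)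
      · have := chain_tg hf hlt (by omega)
        rwa [← hfe] at this
    · refine ⟨f j, ?_, ?_⟩
      · rw [← hf0]; exact chain_rtg hf 0 j (by omega) (by omega)
      · have := chain_tg hf hlt (by omega)
        rwa [hfe] at this
  · rintro ⟨w, hvw, hc⟩ t
    exact (key t).mpr (cycle_all hc t v hvw)
end

section
/- For the Toom freezing majority cellular automaton F on the n×n periodic grid and a configuration x with values in {-1,+1}: if a cell v lies on a cycle of the digraph G_x, i.e., Relation.TransGen R_x v v holds, then v remains in state -1 forever: F^t(x)_v = -1 for every t ∈ ℕ. -/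
lemma toom_out (n : ℕ) (x : ZMod n × ZMod n → ℤ) (hx : ∀ u, x u = -1 ∨ x u = 1)
    {u w : ZMod n × ZMod n} (h : toomRel n x u w) : toom n x u = -1 := by
  obtain ⟨hu, hw, hc⟩ := h
  unfold toom
  rw [if_neg]
  push_neg
  constructor
  · rw [hu]; norm_num
  · rcases hc with hc | hc
    · have h2 := hx (u.1, u.2 + 1)
      have : x (u.1 + 1, u.2) = -1 := by
        rw [← hw, hc]; rcases u with ⟨a, b⟩; simp [Prod.ext_iff]
      rcases h2 with h2 | h2 <;> rw [this, h2] <;> norm_num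
    · have h2 := hx (u.1 + 1, u.2)
      have : x (u.1, u.2 + 1) = -1 := by
        rw [← hw, hc]; rcases u with ⟨a, b⟩; simp [Prod.ext_iff]
      rcases h2 with h2 | h2 <;> rw [this, h2] <;> norm_num

lemma transGen_first {α : Type*} {R : α → α → Prop} {a b : α}
    (h : Relation.TransGen R a b) : ∃ z, R a z := by
  induction h with
  | single h => exact ⟨_, h⟩
  | tail _ _ ih => exact ih

lemma transGen_out {α : Type*} {R : α → α → Prop} {a b : α}
    (h : Relation.TransGen R a b) (hb : ∃ z, R b z) :
    Relation.TransGen (fun u w => R u w ∧ ∃ z, R w z) a b := by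
  induction h using Relation.TransGen.head_induction_on with
  | single h => exact Relation.TransGen.single ⟨h, hb⟩
  | head h ht ih =>
    refine Relation.TransGen.head ⟨h, ?_⟩ ih
    exact transGen_first ht

lemma toom_step (n : ℕ) (x : ZMod n × ZMod n → ℤ) (hx : ∀ u, x u = -1 ∨ x u = 1)
    (v : ZMod n × ZMod n) (hv : Relation.TransGen (toomRel n x) v v) :
    Relation.TransGen (toomRel n (toom n x)) v v := by
  have hb := transGen_first hv
  refine Relation.TransGen.mono ?_ _ _ (transGen_out hv hb)
  rintro u w ⟨h, z, hz⟩
  exact ⟨toom_out n x hx h, toom_out n x hx hz, h.2.2⟩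

theorem toom_cycle_frozen (n : ℕ) (hn : 1 ≤ n)
    (x : ZMod n × ZMod n → ℤ) (hx : ∀ u, x u = -1 ∨ x u = 1)
    (v : ZMod n × ZMod n) (hv : Relation.TransGen (toomRel n x) v v) :
    ∀ t : ℕ, (toom n)^[t] x v = -1 := by
  have key : ∀ t : ℕ, (∀ u, (toom n)^[t] x u = -1 ∨ (toom n)^[t] x u = 1) ∧
      Relation.TransGen (toomRel n ((toom n)^[t] x)) v v := by
    intro t
    induction t with
    | zero => exact ⟨hx, hv⟩
    | succ t ih =>
      rw [Function.iterate_succ_apply']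
      refine ⟨fun u => ?_, toom_step n _ ih.1 v ih.2⟩
      unfold toom; split <;> simp
  intro t
  obtain ⟨h1, h2⟩ := key t
  have hb := transGen_first h2
  exact hb.choose_spec.1
end

section
/- For the Toom freezing majority cellular automaton F on the n×n periodic grid and a configuration x with values in {-1,+1}: if a cell v remains in state -1 at all times (F^t(x)_v = -1 for all t ∈ ℕ), then at least one of its two neighbors w ∈ {v+(1,0), v+(0,1)} also remains in state -1 at all times, i.e., there exists w with R_x v w and F^t(x)_w = -1 for all t ∈ ℕ. -/
theorem toom_frozen_has_frozen_neighbor (n : ℕ) (hn : 1 ≤ n)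
    (x : ZMod n × ZMod n → ℤ) (hx : ∀ u, x u = -1 ∨ x u = 1)
    (v : ZMod n × ZMod n) (hv : ∀ t : ℕ, (toom n)^[t] x v = -1) :
    ∃ w : ZMod n × ZMod n, toomRel n x v w ∧ ∀ t : ℕ, (toom n)^[t] x w = -1 := by
  set p1 : ZMod n × ZMod n := (v.1 + 1, v.2) with hp1
  set p2 : ZMod n × ZMod n := (v.1, v.2 + 1) with hp2
  have hq1 : p1 = v + (1, 0) := by
    simp [hp1, Prod.ext_iff]
  have hq2 : p2 = v + (0, 1) := by
    simp [hp2, Prod.ext_iff]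
  have hrange : ∀ t u, (toom n)^[t] x u = -1 ∨ (toom n)^[t] x u = 1 := by
    intro t u
    cases t with
    | zero => exact hx u
    | succ t =>
      rw [Function.iterate_succ_apply']
      unfold toom
      split <;> simp
  have hmono : ∀ t u, (toom n)^[t] x u = 1 → ∀ s, t ≤ s → (toom n)^[s] x u = 1 := by
    intro t u h s hts
    induction s with
    | zero =>
      have : t = 0 := Nat.le_zero.mp hts
      subst this; exact h
    | succ s ih =>
      rcases Nat.lt_or_ge t (s + 1) with h1 | h2
      · have hs := ih (Nat.lt_succ_iff.mp h1)
        rw [Function.iterate_succ_apply']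
        simp [toom, hs]
      · have : t = s + 1 := le_antisymm hts h2
        subst this; exact h
  have key : ∀ t, (toom n)^[t] x p1 = -1 ∨ (toom n)^[t] x p2 = -1 := by
    intro t
    have hv1 := hv (t + 1)
    rw [Function.iterate_succ_apply'] at hv1
    set y := (toom n)^[t] x with hy
    unfold toom at hv1
    by_contra hcon
    push_neg at hcon
    have h1 : (toom n)^[t] x p1 = 1 := (hrange t p1).resolve_left hcon.1
    have h2 : (toom n)^[t] x p2 = 1 := (hrange t p2).resolve_left hcon.2
    rw [← hy] at h1 h2
    rw [h1, h2] at hv1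
    norm_num at hv1
  by_cases h1 : ∀ t : ℕ, (toom n)^[t] x p1 = -1
  · exact ⟨p1, ⟨hv 0, h1 0, Or.inl hq1⟩, h1⟩
  · push_neg at h1
    obtain ⟨t1, ht1⟩ := h1
    have ht1' : (toom n)^[t1] x p1 = 1 := (hrange t1 p1).resolve_left ht1
    have hall : ∀ t : ℕ, (toom n)^[t] x p2 = -1 := by
      intro t
      by_contra h
      have ht : (toom n)^[t] x p2 = 1 := (hrange t p2).resolve_left h
      have hT := key (max t t1)
      have hA := hmono t1 p1 ht1' (max t t1) (le_max_right _ _)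
      have hB := hmono t p2 ht (max t t1) (le_max_left _ _)
      rcases hT with h' | h' <;> omega
    exact ⟨p2, ⟨hv 0, hall 0, Or.inr hq2⟩, hall⟩
end

section
/- Independence of the subdynamics: let n ≥ 1 and p, p' ≥ 1, let S_E, S_N be finite nonempty sets of positive integers such that every element of S_E is a multiple of p and every element of S_N is a multiple of p', and let F be the LFMCA with sets S_N, S_E on the n×n periodic grid. Fix 0 ≤ i < gcd(p,n) and 0 ≤ j < gcd(p',n) and let V_{(i,j)} = {(a,b) ∈ (ZMod n)² : ∃ q, q' ∈ ℕ, a = i + q·p and b = j + q'·p' in ZMod n}. If two configurations x, y with values in {-1,+1} agree on V_{(i,j)} (x_u = y_u for all u ∈ V_{(i,j)}), then F(x) and F(y) also agree on V_{(i,j)}. -/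
/-- The L-shaped freezing majority cellular automaton on the `n × n` periodic grid. -/
def lfmca (n : ℕ) (SN SE : Finset ℕ) (x : ZMod n × ZMod n → ℤ) :
    ZMod n × ZMod n → ℤ :=
  fun u =>
    if x u = 1 ∨
        0 < (∑ k ∈ SN, x (u.1, u.2 + (k : ZMod n))) +
            (∑ k ∈ SE, x (u.1 + (k : ZMod n), u.2)) then 1 else -1

/-- The subgrid `V_{(i,j)}` of the `n × n` periodic grid. -/
def subgrid (n p p' : ℕ) (i j : ℕ) : Set (ZMod n × ZMod n) :=
  {u | ∃ q q' : ℕ, u.1 = ((i + q * p : ℕ) : ZMod n) ∧ u.2 = ((j + q' * p' : ℕ) : ZMod n)}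

theorem lfmca_subgrid_independent (n p p' : ℕ)
    (hn : 1 ≤ n) (hp : 1 ≤ p) (hp' : 1 ≤ p')
    (SN SE : Finset ℕ) (hSN : SN.Nonempty) (hSE : SE.Nonempty)
    (hSNpos : ∀ k ∈ SN, 0 < k) (hSEpos : ∀ k ∈ SE, 0 < k)
    (hSEmul : ∀ k ∈ SE, p ∣ k) (hSNmul : ∀ k ∈ SN, p' ∣ k)
    (i j : ℕ) (hi : i < Nat.gcd p n) (hj : j < Nat.gcd p' n)
    (x y : ZMod n × ZMod n → ℤ)
    (hx : ∀ u, x u = -1 ∨ x u = 1) (hy : ∀ u, y u = -1 ∨ y u = 1)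
    (hagree : ∀ u ∈ subgrid n p p' i j, x u = y u) :
    ∀ u ∈ subgrid n p p' i j, lfmca n SN SE x u = lfmca n SN SE y u := by
  rintro u ⟨q, q', h1, h2⟩
  have hN : ∀ k ∈ SN, (u.1, u.2 + (k : ZMod n)) ∈ subgrid n p p' i j := by
    intro k hk
    obtain ⟨m, hm⟩ := hSNmul k hk
    exact ⟨q, q' + m, h1, by rw [h2, hm]; push_cast; ring⟩
  have hE : ∀ k ∈ SE, (u.1 + (k : ZMod n), u.2) ∈ subgrid n p p' i j := by
    intro k hk
    obtain ⟨m, hm⟩ := hSEmul k hk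
    exact ⟨q + m, q', by rw [h1, hm]; push_cast; ring, h2⟩
  have hu : x u = y u := hagree u ⟨q, q', h1, h2⟩
  have hsN : (∑ k ∈ SN, x (u.1, u.2 + (k : ZMod n))) =
      ∑ k ∈ SN, y (u.1, u.2 + (k : ZMod n)) :=
    Finset.sum_congr rfl fun k hk => hagree _ (hN k hk)
  have hsE : (∑ k ∈ SE, x (u.1 + (k : ZMod n), u.2)) =
      ∑ k ∈ SE, y (u.1 + (k : ZMod n), u.2) :=
    Finset.sum_congr rfl fun k hk => hagree _ (hE k hk)
  simp only [lfmca, hu, hsN, hsE]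
end

section
/- Conjugacy of equally-spaced L-shaped rules with contiguous ones (supporting Theorem 4): let n ≥ 1, let p, p' ≥ 1 divide n, set m = n / p and m' = n / p', and let k_E, k_N ≥ 2. Let F be the LFMCA on the n×n periodic grid with S_E = {p, 2p, …, k_E·p} and S_N = {p', 2p', …, k_N·p'}, and let G be the LFMCA on the m×m' periodic grid with S_E = {1, 2, …, k_E} and S_N = {1, 2, …, k_N}. Fix an offset (i₀, j₀) ∈ (ZMod n)² and define ψ : (ZMod m) × (ZMod m') → (ZMod n) × (ZMod n) by ψ(a,b) = (i₀ + p·a.val, j₀ + p'·b.val). Then for every configuration x on (ZMod n)² with values in {-1,+1} and every (a,b): F(x)_{ψ(a,b)} = G(x ∘ ψ)_{(a,b)}. -/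
/-- The L-shaped freezing majority cellular automaton on the (possibly rectangular)
`m × m'` periodic grid, with north offsets `SN` and east offsets `SE`. -/
def lfmcaR (m m' : ℕ) (SN SE : Finset ℕ) (x : ZMod m × ZMod m' → ℤ) :
    ZMod m × ZMod m' → ℤ :=
  fun u =>
    if x u = 1 ∨
        0 < (∑ k ∈ SN, x (u.1, u.2 + (k : ZMod m'))) +
            (∑ k ∈ SE, x (u.1 + (k : ZMod m), u.2)) then 1 else -1

lemma shift_key (N M q : ℕ) (hM : M ≠ 0) (hqM : q * M = N)
    (c : ZMod M) (k : ℕ) :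
    ((q * (c + (k : ZMod M)).val : ℕ) : ZMod N)
      = ((q * c.val : ℕ) : ZMod N) + ((k * q : ℕ) : ZMod N) := by
  haveI : NeZero M := ⟨hM⟩
  have h1 : (c + (k : ZMod M)).val ≡ c.val + k [MOD M] := by
    have : (((c + (k : ZMod M)).val : ℕ) : ZMod M) = ((c.val + k : ℕ) : ZMod M) := by
      push_cast [ZMod.natCast_val, ZMod.cast_id]; rfl
    exact (ZMod.natCast_eq_natCast_iff _ _ _).mp this
  have h2 : q * (c + (k : ZMod M)).val ≡ q * (c.val + k) [MOD q * M] :=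
    Nat.ModEq.mul_left' q h1
  rw [hqM] at h2
  have := (ZMod.natCast_eq_natCast_iff _ _ _).mpr h2
  rw [this]
  push_cast
  ring

theorem lfmca_equally_spaced_conjugate_contiguous (n : ℕ) (hn : 1 ≤ n)
    (p p' : ℕ) (hp : 1 ≤ p) (hp' : 1 ≤ p') (hpn : p ∣ n) (hp'n : p' ∣ n)
    (m m' : ℕ) (hm : m = n / p) (hm' : m' = n / p')
    (kE kN : ℕ) (hkE : 2 ≤ kE) (hkN : 2 ≤ kN)
    (i₀ j₀ : ZMod n)
    (ψ : ZMod m × ZMod m' → ZMod n × ZMod n)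
    (hψ : ∀ ab : ZMod m × ZMod m',
      ψ ab = (i₀ + ((p * ab.1.val : ℕ) : ZMod n), j₀ + ((p' * ab.2.val : ℕ) : ZMod n)))
    (x : ZMod n × ZMod n → ℤ) (hx : ∀ u, x u = -1 ∨ x u = 1) :
    ∀ (a : ZMod m) (b : ZMod m'),
      lfmcaR n n ((Finset.Icc 1 kN).image fun k => k * p')
          ((Finset.Icc 1 kE).image fun k => k * p) x (ψ (a, b)) =
        lfmcaR m m' (Finset.Icc 1 kN) (Finset.Icc 1 kE) (x ∘ ψ) (a, b) := by
  intro a b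
  have hpm : p * m = n := by rw [hm, Nat.mul_div_cancel' hpn]
  have hpm' : p' * m' = n := by rw [hm', Nat.mul_div_cancel' hp'n]
  have hmne : m ≠ 0 := by
    rintro rfl; simp at hpm; omega
  have hm'ne : m' ≠ 0 := by
    rintro rfl; simp at hpm'; omega
  have hNsum : (∑ k ∈ (Finset.Icc 1 kN).image (fun k => k * p'),
        x ((ψ (a, b)).1, (ψ (a, b)).2 + (k : ZMod n)))
      = ∑ k ∈ Finset.Icc 1 kN, (x ∘ ψ) (a, b + (k : ZMod m')) := by
    rw [Finset.sum_image (by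
      intro u _ v _ h
      exact Nat.eq_of_mul_eq_mul_right (by omega) h)]
    refine Finset.sum_congr rfl fun k _ => ?_
    simp only [Function.comp_apply, hψ]
    congr 1
    simp only [Prod.mk.injEq]
    constructor
    · trivial
    · rw [shift_key n m' p' hm'ne hpm' b k]
      ring
  have hEsum : (∑ k ∈ (Finset.Icc 1 kE).image (fun k => k * p),
        x ((ψ (a, b)).1 + (k : ZMod n), (ψ (a, b)).2))
      = ∑ k ∈ Finset.Icc 1 kE, (x ∘ ψ) (a + (k : ZMod m), b) := by
    rw [Finset.sum_image (by
      intro u _ v _ h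
      exact Nat.eq_of_mul_eq_mul_right (by omega) h)]
    refine Finset.sum_congr rfl fun k _ => ?_
    simp only [Function.comp_apply, hψ]
    congr 1
    simp only [Prod.mk.injEq]
    constructor
    · rw [shift_key n m p hmne hpm a k]
      ring
    · trivial
  simp only [lfmcaR, hNsum, hEsum, Function.comp_apply]
end

section
/- For the Toom freezing majority cellular automaton on the n×n periodic grid, if a configuration x with values in {-1,+1} has no cycle in G_x (i.e., there is no w with Relation.TransGen R_x w w), then for every cell v with x_v = -1 there exists t ∈ ℕ with F^t(x)_v = +1. -/
theorem toom_no_cycle_all_plus_one (n : ℕ) (hn : 1 ≤ n)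
    (x : ZMod n × ZMod n → ℤ) (hx : ∀ u, x u = -1 ∨ x u = 1)
    (hnocycle : ¬ ∃ w : ZMod n × ZMod n, Relation.TransGen (toomRel n x) w w) :
    ∀ v : ZMod n × ZMod n, x v = -1 → ∃ t : ℕ, (toom n)^[t] x v = 1 := by
  haveI : NeZero n := ⟨by omega⟩
  have hstep : ∀ (y : ZMod n × ZMod n → ℤ) (u : ZMod n × ZMod n),
      y u = 1 → toom n y u = 1 := by
    intro y u h; simp [toom, h]
  have hpers : ∀ t (u : ZMod n × ZMod n), (toom n)^[t] x u = 1 →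
      ∀ s, t ≤ s → (toom n)^[s] x u = 1 := by
    intro t u h s hs
    induction s, hs using Nat.le_induction with
    | base => exact h
    | succ s hs ih => rw [Function.iterate_succ_apply']; exact hstep _ _ ih
  set r : ZMod n × ZMod n → ZMod n × ZMod n → Prop :=
    fun a b => toomRel n x b a with hr
  have htg : ∀ a, ¬ Relation.TransGen r a a := by
    intro a ha
    exact hnocycle ⟨a, (Relation.transGen_swap).mp ha⟩
  haveI : IsIrrefl (ZMod n × ZMod n) (Relation.TransGen r) := ⟨htg⟩
  have hwf' := Finite.wellFounded_of_trans_of_irrefl (Relation.TransGen r)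
  have hwf : WellFounded r :=
    Subrelation.wf (fun h => Relation.TransGen.single h) hwf'
  intro v
  refine hwf.induction (C := fun u => x u = -1 → ∃ t, (toom n)^[t] x u = 1) v ?_
  intro u IH hu
  have key : ∀ w : ZMod n × ZMod n, (w = u + (1, 0) ∨ w = u + (0, 1)) →
      ∃ T, (toom n)^[T] x w = 1 := by
    intro w hw
    rcases hx w with h | h
    · exact IH w ⟨hu, h, hw⟩ h
    · exact ⟨0, h⟩
  obtain ⟨t1, h1⟩ := key (u + (1, 0)) (Or.inl rfl)
  obtain ⟨t2, h2⟩ := key (u + (0, 1)) (Or.inr rfl)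
  refine ⟨max t1 t2 + 1, ?_⟩
  have h1' := hpers t1 _ h1 (max t1 t2) (le_max_left _ _)
  have h2' := hpers t2 _ h2 (max t1 t2) (le_max_right _ _)
  have e1 : u + ((1 : ZMod n), (0 : ZMod n)) = (u.1 + 1, u.2) := by
    ext <;> simp
  have e2 : u + ((0 : ZMod n), (1 : ZMod n)) = (u.1, u.2 + 1) := by
    ext <;> simp
  rw [e1] at h1'
  rw [e2] at h2'
  rw [Function.iterate_succ_apply']
  simp [toom, h1', h2']
end
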